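/- (Variation diminishing property for rational curves) Let q > 0, let k ∈ ℤ, let w_0,…,w_n be positive weights, let b_0,…,b_n be real numbers, and let R(x) = Σ_{i=0}^{n} b_i·R^n_i(x;q) be the rational quantum trigonometric Bézier curve with scalar control points on I = [kπ/2, (k+1)π/2]. Then for every increasing sequence of points x_0 < x_1 < ⋯ < x_m in I, the number of strict sign changes of the sequence (R(x_0), R(x_1), …, R(x_m)) is at most the number of strict sign changes of the sequence (b_0, b_1, …, b_n). -/

import Mathlib

/-- `d(x,y;c) = ((c+1)/2)·sin(y−x) + ((c−1)/2)·sin(y+x)`. -/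
noncomputable def dq (x y c : ℝ) : ℝ :=
  (c + 1) / 2 * Real.sin (y - x) + (c - 1) / 2 * Real.sin (y + x)

/-- The q-integer `[k]_q = 1 + q + ⋯ + q^{k−1}`. -/
noncomputable def qInt (q : ℝ) (k : ℕ) : ℝ := ∑ i ∈ Finset.range k, q ^ i

/-- The q-factorial `[k]_q!`. -/
noncomputable def qFact (q : ℝ) : ℕ → ℝ
  | 0 => 1
  | k + 1 => qInt q (k + 1) * qFact q k

/-- The q-binomial coefficient `[n choose k]_q`. -/
noncomputable def qBinom (q : ℝ) (n k : ℕ) : ℝ :=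
  qFact q n / (qFact q k * qFact q (n - k))

/-- Quantum trigonometric Bernstein basis function `B^n_k(x;q)` on `[a,b]`. -/
noncomputable def qBern (q a b : ℝ) (n k : ℕ) (x : ℝ) : ℝ :=
  qBinom q n k *
    ((∏ i ∈ Finset.range k, dq a x (q ^ i)) * ∏ i ∈ Finset.range (n - k), dq x b (q ^ i)) /
    ∏ i ∈ Finset.range n, dq a b (q ^ i)

/-- A matrix is totally positive if all its minors are nonnegative. -/
def IsTotallyPositive {p r : ℕ} (M : Matrix (Fin p) (Fin r) ℝ) : Prop :=
  ∀ (k : ℕ) (f : Fin k → Fin p) (g : Fin k → Fin r),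
    StrictMono f → StrictMono g → 0 ≤ (M.submatrix f g).det

/-- A system of functions is totally positive on `I` if all its collocation matrices at
increasing points of `I` are totally positive. -/
def IsTotallyPositiveSystem (I : Set ℝ) {n : ℕ} (φ : Fin n → ℝ → ℝ) : Prop :=
  ∀ (m : ℕ) (x : Fin (m + 1) → ℝ), StrictMono x → (∀ j, x j ∈ I) →
    IsTotallyPositive (Matrix.of fun i j => φ i (x j))

/-- Number of sign changes between consecutive entries of a list. -/
noncomputable def signChanges : List ℝ → ℕ
  | [] => 0
  | [_] => 0
  | a :: b :: t => (if a * b < 0 then 1 else 0) + signChanges (b :: t)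

/-- `S⁻(v)`: the number of strict sign changes of a finite real sequence, i.e. the number
of sign changes after deleting all zero entries. -/
noncomputable def strictSignChanges (v : List ℝ) : ℕ :=
  signChanges (v.filter fun x => x ≠ 0)

/-- Rational quantum trigonometric Bernstein basis function `R^n_k(x;q)` with weights `w`. -/
noncomputable def rqBern (q a b : ℝ) (n : ℕ) (w : Fin (n + 1) → ℝ) (k : Fin (n + 1)) (x : ℝ) : ℝ :=
  w k * qBern q a b n k x / ∑ i : Fin (n + 1), w i * qBern q a b n i x

lemma mul_neg_iff_sign (a b : ℝ) : a * b < 0 ↔ SignType.sign a * SignType.sign b = -1 := by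
  rw [← sign_mul, sign_eq_neg_one_iff]

theorem signChanges_congr : ∀ (l₁ l₂ : List ℝ),
    l₁.map SignType.sign = l₂.map SignType.sign → signChanges l₁ = signChanges l₂
  | [], [], _ => rfl
  | [], _ :: _, h => by simp at h
  | _ :: _, [], h => by simp at h
  | [_], [_], _ => rfl
  | [_], _ :: _ :: _, h => by simp at h
  | _ :: _ :: _, [_], h => by simp at h
  | a :: a' :: t, b :: b' :: s, h => by
      simp only [List.map_cons, List.cons.injEq] at h
      obtain ⟨h1, h2, h3⟩ := h
      have hrec := signChanges_congr (a' :: t) (b' :: s) (by simp [h2, h3])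
      have hiff : (a * a' < 0) ↔ (b * b' < 0) := by
        rw [mul_neg_iff_sign, mul_neg_iff_sign, h1, h2]
      simp only [signChanges, hrec, hiff]

lemma filter_map_sign (l : List ℝ) :
    (l.filter fun x => x ≠ 0).map SignType.sign
      = (l.map SignType.sign).filter (fun s => s ≠ 0) := by
  induction l with
  | nil => simp
  | cons x t ih =>
      by_cases hx : x = 0
      · simpa [hx, List.filter_cons, sign_eq_zero_iff] using ih
      · simpa [hx, List.filter_cons, sign_eq_zero_iff] using ih

theorem strictSignChanges_congr (l₁ l₂ : List ℝ)
    (h : l₁.map SignType.sign = l₂.map SignType.sign) :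
    strictSignChanges l₁ = strictSignChanges l₂ := by
  apply signChanges_congr
  rw [filter_map_sign, filter_map_sign, h]

lemma signChanges_le_cons (a : ℝ) (l : List ℝ) : signChanges l ≤ signChanges (a :: l) := by
  cases l with
  | nil => simp [signChanges]
  | cons b t => simp only [signChanges]; omega

lemma signChanges_le_append (l₁ l₂ : List ℝ) : signChanges l₂ ≤ signChanges (l₁ ++ l₂) := by
  induction l₁ with
  | nil => simp
  | cons a t ih => exact ih.trans (signChanges_le_cons a (t ++ l₂))

lemma neg_trans {s x h : ℝ} (hs : s ≠ 0) (h1 : 0 < s * x) (h2 : s * h < 0) : x * h < 0 := by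
  rcases lt_or_gt_of_ne hs with hneg | hpos
  · have hx : x < 0 := by nlinarith
    have hh : 0 < h := by nlinarith
    exact mul_neg_of_neg_of_pos hx hh
  · have hx : 0 < x := by nlinarith
    have hh : h < 0 := by nlinarith
    exact mul_neg_of_pos_of_neg hx hh

lemma sc_skip (s x : ℝ) (l : List ℝ) (hs : s ≠ 0) (hx : x ≠ 0) (hl : ∀ y ∈ l, y ≠ 0) :
    signChanges (s :: l) ≤ signChanges (s :: x :: l) := by
  cases l with
  | nil => simp [signChanges]
  | cons h t =>
      simp only [signChanges]
      have hh : h ≠ 0 := hl h (by simp)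
      by_cases hsh : s * h < 0
      · by_cases hsx : s * x < 0
        · simp only [if_pos hsh, if_pos hsx]; omega
        · have hsx' : 0 < s * x := lt_of_le_of_ne (not_lt.mp hsx)
            (by intro hc; exact hx (by rcases mul_eq_zero.mp hc.symm with h'|h'; exact absurd h' hs; exact h'))
          have hxh : x * h < 0 := neg_trans hs hsx' hsh
          simp only [if_pos hsh, if_pos hxh]; omega
      · simp only [if_neg hsh]; omega

lemma cons_sublist_split {α : Type*} {a : α} {sub l : List α} (h : (a :: sub).Sublist l) :
    ∃ l₁ l₂, l = l₁ ++ a :: l₂ ∧ sub.Sublist l₂ := by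
  induction l with
  | nil => simp at h
  | cons x t ih =>
      rcases h with _ | h | h
      case cons h' =>
        obtain ⟨l₁, l₂, rfl, hs⟩ := ih h'
        exact ⟨x :: l₁, l₂, rfl, hs⟩
      case cons_cons => exact ⟨[], t, rfl, by assumption⟩

theorem chain_le_signChanges : ∀ (l : List ℝ), (∀ y ∈ l, y ≠ 0) → ∀ (s : ℝ), s ≠ 0 →
    ∀ (sub : List ℝ), sub.Sublist l → List.IsChain (fun u v => u * v < 0) (s :: sub) →
    sub.length ≤ signChanges (s :: l) := by
  intro l
  induction l with
  | nil => intro _ s _ sub hsub _; simp [List.sublist_nil.mp hsub]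
  | cons x t ih =>
      intro hl s hs sub hsub hch
      have hx : x ≠ 0 := hl x (by simp)
      have ht : ∀ y ∈ t, y ≠ 0 := fun y hy => hl y (by simp [hy])
      cases hsub with
      | cons _ hsub' =>
        exact (ih ht s hs sub hsub' hch).trans (sc_skip s x t hs hx ht)
      | @cons_cons sub' _ _ hsub' =>
        have hsx : s * x < 0 := (List.isChain_cons_cons.mp hch).1
        have hch' : List.IsChain (fun u v => u * v < 0) (x :: sub') := (List.isChain_cons_cons.mp hch).2
        have hlen := ih ht x hx sub' hsub' hch'
        have heq : signChanges (s :: x :: t) = 1 + signChanges (x :: t) := by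
          simp [signChanges, hsx]
        simp only [List.length_cons, heq]; omega

theorem sublist_chain_length_le (l sub : List ℝ) (hsub : sub.Sublist l)
    (hnz : ∀ y ∈ sub, y ≠ 0) (hch : List.IsChain (fun u v => u * v < 0) sub) :
    sub.length ≤ strictSignChanges l + 1 := by
  have hfil : sub.Sublist (l.filter fun y => y ≠ 0) := by
    have heq : sub.filter (fun y => decide (y ≠ 0)) = sub :=
      List.filter_eq_self.mpr (by intro y hy; simpa using hnz y hy)
    have := hsub.filter (fun y => decide (y ≠ 0))
    rwa [heq] at this
  have hflnz : ∀ y ∈ (l.filter fun y => y ≠ 0), y ≠ 0 := by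
    intro y hy; simpa using (List.mem_filter.mp hy).2
  cases sub with
  | nil => simp
  | cons s sub' =>
      obtain ⟨l₁, l₂, hsplit, hsub2⟩ := cons_sublist_split hfil
      have hs : s ≠ 0 := hnz s (by simp)
      have hl₂ : ∀ y ∈ l₂, y ≠ 0 := by
        intro y hy; exact hflnz y (by rw [hsplit]; simp [hy])
      have h1 : sub'.length ≤ signChanges (s :: l₂) :=
        chain_le_signChanges l₂ hl₂ s hs sub' hsub2 hch
      have h2 : signChanges (s :: l₂) ≤ signChanges (l₁ ++ s :: l₂) :=
        signChanges_le_append l₁ (s :: l₂)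
      have h3 : strictSignChanges l = signChanges (l₁ ++ s :: l₂) := by
        unfold strictSignChanges; rw [hsplit]
      simp only [List.length_cons]
      omega

theorem exists_chain_of_signChanges : ∀ (l : List ℝ), (∀ y ∈ l, y ≠ 0) → l ≠ [] →
    ∃ sub : List ℝ, sub.Sublist l ∧ List.IsChain (fun u v => u * v < 0) sub ∧
      sub.length = signChanges l + 1 ∧ sub.head? = l.head?
  | [], _, hne => absurd rfl hne
  | [x], _, _ => ⟨[x], by simp, by simp, by simp [signChanges], rfl⟩
  | x :: y :: t, hnz, _ => by
      have hy : ∀ z ∈ y :: t, z ≠ 0 := fun z hz => hnz z (List.mem_cons_of_mem x hz)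
      obtain ⟨sub', hsub', hch', hlen', hhead'⟩ :=
        exists_chain_of_signChanges (y :: t) hy (by simp)
      rcases sub' with _ | ⟨y', rest⟩
      · simp at hhead'
      · have hyy : y = y' := by simpa using hhead'.symm
        subst hyy
        by_cases hxy : x * y < 0
        · refine ⟨x :: y :: rest, List.Sublist.cons₂ x hsub', ?_, ?_, rfl⟩
          · exact List.isChain_cons_cons.mpr ⟨hxy, hch'⟩
          · simp only [List.length_cons] at hlen' ⊢
            simp [signChanges, hxy]; omega
        · have hrt : rest.Sublist t := by
            have := List.sublist_cons_of_sublist y (List.cons_sublist_cons.mp hsub')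
            exact List.cons_sublist_cons.mp hsub'
          refine ⟨x :: rest, List.Sublist.cons₂ x (hrt.trans (List.sublist_cons_self y t)), ?_, ?_, rfl⟩
          · cases rest with
            | nil => simp
            | cons z rest' =>
                have hyz : y * z < 0 := (List.isChain_cons_cons.mp hch').1
                have hxz : x * z < 0 := by
                  have hx0 : x ≠ 0 := hnz x (by simp)
                  have hy0 : y ≠ 0 := hnz y (by simp)
                  have hxy' : 0 < y * x := by
                    rcases lt_trichotomy (x * y) 0 with h|h|h
                    · exact absurd h hxy
                    · rcases mul_eq_zero.mp h with h'|h'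
                      · exact absurd h' hx0
                      · exact absurd h' hy0
                    · nlinarith
                  exact neg_trans hy0 hxy' hyz
                exact List.isChain_cons_cons.mpr ⟨hxz, (List.isChain_cons_cons.mp hch').2⟩
          · simp only [List.length_cons] at hlen' ⊢
            simp [signChanges, hxy]; omega

theorem exists_chain_strict (l : List ℝ) (hne : ∃ x ∈ l, x ≠ 0) :
    ∃ sub : List ℝ, sub.Sublist l ∧ (∀ y ∈ sub, y ≠ 0) ∧
      List.IsChain (fun u v => u * v < 0) sub ∧ sub.length = strictSignChanges l + 1 := by
  set fl := l.filter (fun y => decide (y ≠ 0)) with hfl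
  have hflnz : ∀ y ∈ fl, y ≠ 0 := by intro y hy; simpa using (List.mem_filter.mp hy).2
  have hflne : fl ≠ [] := by
    obtain ⟨x, hx, hx0⟩ := hne
    have : x ∈ fl := List.mem_filter.mpr ⟨hx, by simpa using hx0⟩
    exact List.ne_nil_of_mem this
  obtain ⟨sub, hsub, hch, hlen, _⟩ := exists_chain_of_signChanges fl hflnz hflne
  exact ⟨sub, hsub.trans (List.filter_sublist (l := l)), fun y hy => hflnz y (hsub.subset hy), hch, hlen⟩

-- B2
theorem ix_le {N : ℕ} (v : Fin N → ℝ) (ix : List (Fin N)) (hp : ix.Pairwise (· < ·))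
    (hnz : ∀ i ∈ ix, v i ≠ 0) (hch : ix.IsChain fun i j => v i * v j < 0) :
    ix.length ≤ strictSignChanges (List.ofFn v) + 1 := by
  classical
  set l := List.ofFn v with hl
  have hlen : l.length = N := List.length_ofFn (f := v)
  set is : List (Fin l.length) := ix.map (Fin.cast hlen.symm) with his
  have hmap : is.map l.get = ix.map v := by
    rw [his, List.map_map]
    apply List.map_congr_left
    intro i _
    simp [hl, List.get_ofFn]
  have hsub : (ix.map v).Sublist l := by
    rw [← hmap]
    apply List.map_getElem_sublist
    rw [his]
    apply List.pairwise_map.mpr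
    exact hp.imp (fun h => by simpa using h)
  have := sublist_chain_length_le l (ix.map v) hsub
    (by intro y hy; obtain ⟨i, hi, rfl⟩ := List.mem_map.mp hy; exact hnz i hi)
    (List.isChain_map v |>.mpr hch)
  simpa using this

-- B1
theorem exists_ix {N : ℕ} (v : Fin N → ℝ) (hne : ∃ i, v i ≠ 0) :
    ∃ ix : List (Fin N), ix.Pairwise (· < ·) ∧ (∀ i ∈ ix, v i ≠ 0) ∧
      ix.IsChain (fun i j => v i * v j < 0) ∧
      ix.length = strictSignChanges (List.ofFn v) + 1 := by
  classical
  set l := List.ofFn v with hl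
  have hlen : l.length = N := List.length_ofFn (f := v)
  obtain ⟨i, hi⟩ := hne
  obtain ⟨sub, hsub, hnz, hch, hlenS⟩ := exists_chain_strict l
    ⟨v i, by rw [hl]; exact List.mem_ofFn.mpr ⟨i, rfl⟩, hi⟩
  obtain ⟨is, hmap, hpw⟩ := List.sublist_eq_map_getElem hsub
  refine ⟨is.map (Fin.cast hlen), ?_, ?_, ?_, ?_⟩
  · apply List.pairwise_map.mpr
    refine hpw.imp (fun h => ?_)
    simp only [Fin.lt_def, Fin.coe_cast]
    exact h
  · intro j hj
    obtain ⟨i', hi', rfl⟩ := List.mem_map.mp hj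
    have : l.get i' ∈ sub := by rw [hmap]; exact List.mem_map_of_mem hi'
    have h0 := hnz _ this
    simp [hl, List.get_ofFn] at h0; exact h0
  · have : List.IsChain (fun a b => l.get a * l.get b < 0) is := by
      rw [hmap] at hch
      exact (List.isChain_map l.get).mp hch
    rw [List.isChain_map]
    apply this.imp
    intro a b h
    simp [hl, List.get_ofFn] at h; exact h
  · rw [List.length_map, ← hlenS, hmap, List.length_map]

open Finset in
noncomputable def pEval (a : ℕ → ℝ) (n : ℕ) (u : ℝ) : ℝ := ∑ i ∈ range (n + 1), a i * u ^ i

lemma pEval_continuous (a : ℕ → ℝ) (n : ℕ) : Continuous (pEval a n) := by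
  unfold pEval
  exact continuous_finset_sum _ fun i _ => (continuous_const.mul (continuous_pow i) : Continuous fun u : ℝ => a i * u ^ i)

theorem roots_between' (a : ℕ → ℝ) (n : ℕ) :
    ∀ (pts : List ℝ), pts.Pairwise (· < ·) →
      pts.IsChain (fun s t => pEval a n s * pEval a n t < 0) → pts ≠ [] →
      ∃ roots : List ℝ, roots.Pairwise (· < ·) ∧ roots.length + 1 = pts.length ∧
        (∀ r ∈ roots, pEval a n r = 0) ∧
        (∀ r ∈ roots, ∀ h, pts.head? = some h → h < r)
  | [], _, _, hne => absurd rfl hne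
  | [s], _, _, _ => ⟨[], by simp, by simp, by simp, by simp⟩
  | s :: t :: rest, hpw, hch, _ => by
      have hst : s < t := (List.pairwise_cons.mp hpw).1 t (by simp)
      have hval : pEval a n s * pEval a n t < 0 := (List.isChain_cons_cons.mp hch).1
      obtain ⟨roots', hpw', hlen', hz', hgt'⟩ := roots_between' a n (t :: rest)
        (List.pairwise_cons.mp hpw).2 (List.isChain_cons_cons.mp hch).2 (by simp)
      have hcont : ContinuousOn (pEval a n) (Set.Icc s t) :=
        (pEval_continuous a n).continuousOn
      have hroot : ∃ c ∈ Set.Ioo s t, pEval a n c = 0 := by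
        rcases mul_neg_iff.mp hval with ⟨hpos, hneg⟩ | ⟨hneg, hpos⟩
        · obtain ⟨c, hc, hc0⟩ := intermediate_value_Ioo' hst.le hcont
            (show (0:ℝ) ∈ Set.Ioo (pEval a n t) (pEval a n s) from ⟨hneg, hpos⟩)
          exact ⟨c, hc, hc0⟩
        · obtain ⟨c, hc, hc0⟩ := intermediate_value_Ioo hst.le hcont
            (show (0:ℝ) ∈ Set.Ioo (pEval a n s) (pEval a n t) from ⟨hneg, hpos⟩)
          exact ⟨c, hc, hc0⟩
      obtain ⟨c, ⟨hcs, hct⟩, hc0⟩ := hroot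
      refine ⟨c :: roots', ?_, by simp [← hlen'], ?_, ?_⟩
      · refine List.pairwise_cons.mpr ⟨?_, hpw'⟩
        intro r hr
        exact hct.trans (hgt' r hr t rfl)
      · intro r hr
        rcases List.mem_cons.mp hr with rfl | hr
        · exact hc0
        · exact hz' r hr
      · intro r hr h hh
        have : h = s := by simpa using hh.symm
        subst this
        rcases List.mem_cons.mp hr with rfl | hr
        · exact hcs
        · exact hst.trans (hgt' r hr t rfl)

/-- Rolle step: from roots of `P` get interlacing roots of the transformed polynomial. -/
theorem rolle_step (a : ℕ → ℝ) (n : ℕ) (θ : ℝ) :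
    ∀ (roots : List ℝ), roots.Pairwise (· < ·) →
      (∀ r ∈ roots, 0 < r ∧ pEval a n r = 0) → roots ≠ [] →
      ∃ roots' : List ℝ, roots'.Pairwise (· < ·) ∧ roots'.length + 1 = roots.length ∧
        (∀ r ∈ roots', 0 < r ∧ pEval (fun i => ((i : ℝ) - θ) * a i) n r = 0) ∧
        (∀ r ∈ roots', ∀ h, roots.head? = some h → h < r)
  | [], _, _, hne => absurd rfl hne
  | [r0], _, _, _ => ⟨[], by simp, by simp, by simp, by simp⟩
  | r0 :: r1 :: rest, hpw, hr, _ => by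
      have h01 : r0 < r1 := (List.pairwise_cons.mp hpw).1 r1 (by simp)
      have hr0 : 0 < r0 := (hr r0 (by simp)).1
      have hr1 : 0 < r1 := (hr r1 (by simp [List.mem_cons])).1
      obtain ⟨roots'', hpw'', hlen'', hz'', hgt''⟩ := rolle_step a n θ (r1 :: rest)
        (List.pairwise_cons.mp hpw).2
        (fun r hrm => hr r (List.mem_cons_of_mem r0 hrm)) (by simp)
      -- Rolle on g u = ∑ a i * u ^ ((i:ℝ) - θ) over [r0, r1]
      set g : ℝ → ℝ := fun u => ∑ i ∈ Finset.range (n + 1), a i * u ^ ((i : ℝ) - θ) with hg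
      set g' : ℝ → ℝ := fun u =>
        ∑ i ∈ Finset.range (n + 1), a i * (((i : ℝ) - θ) * u ^ ((i : ℝ) - θ - 1)) with hg'
      have hderiv : ∀ u : ℝ, 0 < u → HasDerivAt g (g' u) u := by
        intro u hu
        apply HasDerivAt.fun_sum
        intro i _
        exact (Real.hasDerivAt_rpow_const (Or.inl hu.ne')).const_mul (a i)
      have hgval : ∀ r : ℝ, 0 < r → pEval a n r = 0 → g r = 0 := by
        intro r hrpos hroot
        have : g r = (∑ i ∈ Finset.range (n + 1), a i * r ^ i) * r ^ (-θ : ℝ) := by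
          rw [Finset.sum_mul]
          apply Finset.sum_congr rfl
          intro i _
          rw [mul_assoc, ← Real.rpow_natCast r i, ← Real.rpow_add hrpos]
          ring_nf
        rw [this]
        have : (∑ i ∈ Finset.range (n + 1), a i * r ^ i) = 0 := hroot
        rw [this, zero_mul]
      have hcont : ContinuousOn g (Set.Icc r0 r1) := by
        intro u hu
        have hupos : 0 < u := lt_of_lt_of_le hr0 hu.1
        exact (hderiv u hupos).continuousAt.continuousWithinAt
      obtain ⟨c, hcmem, hc0⟩ := exists_hasDerivAt_eq_zero h01 hcont
        (by rw [hgval r0 hr0 (hr r0 (by simp)).2, hgval r1 hr1 (hr r1 (by simp [List.mem_cons])).2])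
        (fun u hu => hderiv u (hr0.trans hu.1))
      have hcpos : 0 < c := hr0.trans hcmem.1
      have hcroot : pEval (fun i => ((i : ℝ) - θ) * a i) n c = 0 := by
        have hexp : ∀ i : ℕ, a i * (((i : ℝ) - θ) * c ^ ((i : ℝ) - θ - 1)) * c ^ (θ + 1)
            = ((i : ℝ) - θ) * a i * c ^ i := by
          intro i
          rw [mul_assoc (a i), mul_assoc, ← Real.rpow_add hcpos, ← Real.rpow_natCast c i]
          ring_nf
        have : pEval (fun i => ((i : ℝ) - θ) * a i) n c = g' c * c ^ (θ + 1 : ℝ) := by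
          rw [hg', Finset.sum_mul]
          apply Finset.sum_congr rfl
          intro i _
          rw [hexp i]
        rw [this, hc0, zero_mul]
      refine ⟨c :: roots'', ?_, by simp [← hlen''], ?_, ?_⟩
      · refine List.pairwise_cons.mpr ⟨?_, hpw''⟩
        intro r hrm
        exact hcmem.2.trans (hgt'' r hrm r1 rfl)
      · intro r hrm
        rcases List.mem_cons.mp hrm with rfl | hrm
        · exact ⟨hcpos, hcroot⟩
        · exact hz'' r hrm
      · intro r hrm h hh
        have : h = r0 := by simpa using hh.symm
        subst this
        rcases List.mem_cons.mp hrm with rfl | hrm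
        · exact hcmem.1
        · exact h01.trans (hgt'' r hrm r1 rfl)

lemma sign_same {x y s : ℝ} (h1 : 0 < x * s) (h2 : 0 < y * s) : 0 < x * y := by
  nlinarith [mul_pos h1 h2, sq_nonneg s, sq_nonneg (x*y)]

lemma sign_opp {x y s : ℝ} (h1 : 0 < x * s) (h2 : y * s < 0) : x * y < 0 := by
  nlinarith [mul_pos h1 (neg_pos.mpr h2), sq_nonneg s]

lemma pos_of_ne {x : ℝ} (h0 : x ≠ 0) (h : ¬ x < 0) : 0 < x :=
  lt_of_le_of_ne (not_lt.mp h) (Ne.symm h0)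

lemma x_neg_of {c x : ℝ} (hc : 0 < c) (h : c * x < 0) : x < 0 := by
  by_contra hcon
  push_neg at hcon
  nlinarith [mul_nonneg hc.le hcon]

lemma x_pos_of {c x : ℝ} (hc : c < 0) (h : c * x < 0) : 0 < x := by
  by_contra hcon
  push_neg at hcon
  nlinarith [mul_nonneg (neg_nonneg.mpr hc.le) (neg_nonneg.mpr hcon)]

lemma sum_pos_eval {n : ℕ} (a : ℕ → ℝ) (μ : Fin (n + 1)) (hμ : 0 < a μ)
    (hnn : ∀ i : Fin (n + 1), 0 ≤ a i) (r : ℝ) (hr : 0 < r) : 0 < pEval a n r := by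
  unfold pEval
  apply Finset.sum_pos'
  · intro i hi
    exact mul_nonneg (hnn ⟨i, Finset.mem_range.mp hi⟩) (pow_pos hr i).le
  · exact ⟨(μ : ℕ), Finset.mem_range.mpr μ.isLt, mul_pos hμ (pow_pos hr _)⟩

theorem descartes_lite (n : ℕ) : ∀ (V : ℕ) (a : ℕ → ℝ),
    strictSignChanges (List.ofFn fun i : Fin (n + 1) => a i) ≤ V →
    (∃ i : Fin (n + 1), a (i : ℕ) ≠ 0) →
    ∀ (roots : List ℝ), roots.Pairwise (· < ·) →
      (∀ r ∈ roots, 0 < r ∧ pEval a n r = 0) → roots.length ≤ V := by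
  intro V
  induction V with
  | zero =>
      intro a hS hne roots hpw hr
      rcases roots with _ | ⟨r, rs⟩
      · simp
      · exfalso
        obtain ⟨μ, hμ⟩ := hne
        set v : Fin (n + 1) → ℝ := fun i => a (i : ℕ) with hv
        have hnoneg : ∀ i : Fin (n + 1), ¬ (v i * v μ < 0) := by
          intro i hcon
          have hvi : v i ≠ 0 := left_ne_zero_of_mul (ne_of_lt hcon)
          have hiμ : i ≠ μ := by
            intro h; rw [h] at hcon; nlinarith [mul_self_nonneg (v μ)]
          rcases lt_or_gt_of_ne hiμ with hlt | hgt
          · have := ix_le v [i, μ] (by simp [hlt]) (by intro z hz; simp at hz; rcases hz with rfl | rfl; exact hvi; exact hμ)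
              (by simp [List.isChain_cons_cons, hcon])
            simp only [List.length_cons, List.length_nil] at this; omega
          · have := ix_le v [μ, i] (by simp [hgt]) (by intro z hz; simp at hz; rcases hz with rfl | rfl; exact hμ; exact hvi)
              (by simp [List.isChain_cons_cons]; nlinarith)
            simp only [List.length_cons, List.length_nil] at this; omega
        have hrpos : 0 < r := (hr r (by simp)).1
        have hroot : pEval a n r = 0 := (hr r (by simp)).2
        have hprod_pos : ∀ i : Fin (n + 1), v i ≠ 0 → 0 < v i * v μ := by
          intro i hvi
          exact pos_of_ne (mul_ne_zero hvi hμ) (hnoneg i)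
        rcases lt_or_gt_of_ne hμ with hneg | hpos
        · -- a μ < 0 : use -a
          have hμ' : 0 < -(a (μ : ℕ)) := by simpa [hv] using hneg
          have hnn : ∀ i : Fin (n + 1), 0 ≤ -(a (i : ℕ)) := by
            intro i
            by_cases hvi : v i = 0
            · simp only [hv] at hvi; rw [hvi]; simp
            · have := hprod_pos i hvi
              simp only [hv] at this hvi ⊢
              nlinarith
          have hpos' := sum_pos_eval (fun i => -(a i)) μ hμ' hnn r hrpos
          have heq : pEval (fun i => -(a i)) n r = - pEval a n r := by
            unfold pEval
            rw [← Finset.sum_neg_distrib]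
            apply Finset.sum_congr rfl; intros; ring
          rw [heq, hroot] at hpos'; simp at hpos'
        · have hnn : ∀ i : Fin (n + 1), 0 ≤ a (i : ℕ) := by
            intro i
            by_cases hvi : v i = 0
            · simp only [hv] at hvi; rw [hvi]
            · have := hprod_pos i hvi
              simp only [hv] at this hvi ⊢
              nlinarith
          have hpos' := sum_pos_eval a μ hpos hnn r hrpos
          rw [hroot] at hpos'; simp at hpos'
  | succ V IH =>
      intro a hS hne roots hpw hr
      by_cases hS' : strictSignChanges (List.ofFn fun i : Fin (n + 1) => a i) ≤ V
      · exact (IH a hS' hne roots hpw hr).trans (Nat.le_succ V)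
      have hSV : strictSignChanges (List.ofFn fun i : Fin (n + 1) => a i) = V + 1 := by omega
      classical
      set v : Fin (n + 1) → ℝ := fun i => a (i : ℕ) with hv
      set NZ : Finset (Fin (n + 1)) := Finset.univ.filter (fun i => v i ≠ 0) with hNZ
      obtain ⟨μ0, hμ0⟩ := hne
      have hNZne : NZ.Nonempty := ⟨μ0, by simp [hNZ, hv, hμ0]⟩
      set μ := NZ.min' hNZne with hμdef
      have hμ : v μ ≠ 0 := by
        have := NZ.min'_mem hNZne
        simpa [hNZ] using this
      set E : Finset (Fin (n + 1)) := Finset.univ.filter (fun i => v i * v μ < 0) with hE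
      have hEne : E.Nonempty := by
        obtain ⟨ix, hixpw, hixnz, hixch, hixlen⟩ := exists_ix v ⟨μ, hμ⟩
        rcases ix with _ | ⟨i, ix'⟩
        · simp only [List.length_nil] at hixlen; omega
        rcases ix' with _ | ⟨j, ix''⟩
        · simp only [List.length_cons, List.length_nil] at hixlen; omega
        have hij : v i * v j < 0 := (List.isChain_cons_cons.mp hixch).1
        have hvi : v i ≠ 0 := hixnz i (by simp)
        by_cases hiμ : v i * v μ < 0
        · exact ⟨i, by simp [hE, hiμ]⟩
        · have hpos : 0 < v i * v μ := pos_of_ne (mul_ne_zero hvi hμ) hiμ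
          have : v j * v μ < 0 := by nlinarith [sq_nonneg (v i)]
          exact ⟨j, by simp [hE, this]⟩
      set e := E.min' hEne with hedef
      have he : v e * v μ < 0 := by
        have := E.min'_mem hEne
        simpa [hE] using this
      have hve : v e ≠ 0 := left_ne_zero_of_mul (ne_of_lt he)
      have hμe : μ < e := by
        have hle : μ ≤ e := NZ.min'_le e (by simp [hNZ, hve])
        rcases hle.lt_or_eq with h | h
        · exact h
        · exfalso; rw [h] at he; nlinarith [mul_self_nonneg (v e)]
      set B : Finset (Fin (n + 1)) := NZ.filter (fun i => i < e) with hB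
      have hBne : B.Nonempty := ⟨μ, by simp [hB, hNZ, hμ, hμe]⟩
      set p := B.max' hBne with hpdef
      have hpB := B.max'_mem hBne
      have hpB2 : v p ≠ 0 ∧ p < e := by
        have h2 := Finset.mem_filter.mp hpB
        have h3 := Finset.mem_filter.mp h2.1
        exact ⟨h3.2, h2.2⟩
      have hvp : v p ≠ 0 := hpB2.1
      have hpe : p < e := hpB2.2
      have h_le_p : ∀ i : Fin (n + 1), i < e → v i ≠ 0 → i ≤ p := by
        intro i hie hinz
        exact B.le_max' i (by simp [hB, hNZ, hinz, hie])
      have h_pos_below : ∀ i : Fin (n + 1), i < e → v i ≠ 0 → 0 < v i * v μ := by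
        intro i hie hinz
        have hiE : i ∉ E := by
          intro hiE
          exact absurd (E.min'_le i hiE) (not_le.mpr hie)
        have : ¬ (v i * v μ < 0) := by simpa [hE] using hiE
        exact pos_of_ne (mul_ne_zero hinz hμ) this
      have hvpμ : 0 < v p * v μ := h_pos_below p hpe hvp
      set θ : ℝ := ((p : ℕ) : ℝ) + 1 / 2 with hθ
      set a' : ℕ → ℝ := fun i => ((i : ℝ) - θ) * a i with ha'
      set v' : Fin (n + 1) → ℝ := fun i => a' (i : ℕ) with hv'
      have hfactneg : ∀ i : Fin (n + 1), i ≤ p → ((i : ℕ) : ℝ) - θ < 0 := by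
        intro i hip
        have h1 : (i : ℕ) ≤ (p : ℕ) := hip
        have h2 : ((i : ℕ) : ℝ) ≤ ((p : ℕ) : ℝ) := Nat.cast_le.mpr h1
        rw [hθ]; linarith
      have hfactpos : ∀ i : Fin (n + 1), p < i → 0 < ((i : ℕ) : ℝ) - θ := by
        intro i hip
        have h1 : (p : ℕ) + 1 ≤ (i : ℕ) := hip
        have h2 : ((p : ℕ) : ℝ) + 1 ≤ ((i : ℕ) : ℝ) := by exact_mod_cast h1
        rw [hθ]; linarith
      have hv'e : v' e ≠ 0 :=
        mul_ne_zero (ne_of_gt (hfactpos e hpe)) hve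
      have hv'nz : ∀ i : Fin (n + 1), v' i ≠ 0 → v i ≠ 0 := by
        intro i h
        exact right_ne_zero_of_mul h
      -- the key combinatorial bound : S⁻(v') ≤ V
      have hKey : strictSignChanges (List.ofFn v') ≤ V := by
        obtain ⟨ix, hixpw, hixnz, hixch, hixlen⟩ := exists_ix v' ⟨e, hv'e⟩
        rcases ix with _ | ⟨i0, rest⟩
        · simp at hixlen
        have hvi0 : v i0 ≠ 0 := hv'nz i0 (hixnz i0 (by simp))
        have hrest_nz : ∀ z ∈ rest, v z ≠ 0 := fun z hz =>
          hv'nz z (hixnz z (by simp [hz]))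
        have hi0rest : ∀ z ∈ rest, i0 < z := (List.pairwise_cons.mp hixpw).1
        have hrest_pw : rest.Pairwise (· < ·) := (List.pairwise_cons.mp hixpw).2
        have hrest_gt : ∀ z ∈ rest, p < z := by
          rcases rest with _ | ⟨i1, rest'⟩
          · simp
          have hp1 : p < i1 := by
            by_contra hcon
            push_neg at hcon
            have hi01 : i0 < i1 := hi0rest i1 (by simp)
            have hi0p : i0 ≤ p := le_of_lt (lt_of_lt_of_le hi01 hcon)
            have h0 := h_pos_below i0 (lt_of_le_of_lt hi0p hpe) hvi0
            have h1 := h_pos_below i1 (lt_of_le_of_lt hcon hpe) (hrest_nz i1 (by simp))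
            have hch01 : v' i0 * v' i1 < 0 := (List.isChain_cons_cons.mp hixch).1
            have hf0 := hfactneg i0 hi0p
            have hf1 := hfactneg i1 hcon
            have h01 : 0 < v i0 * v i1 := sign_same h0 h1
            have heq : v' i0 * v' i1 = ((((i0 : ℕ) : ℝ) - θ) * ((((i1 : ℕ) : ℝ)) - θ)) * (v i0 * v i1) := by
              simp only [hv', ha', hv]; ring
            rw [heq] at hch01
            have := x_neg_of (mul_pos_of_neg_of_neg hf0 hf1) hch01
            linarith
          intro z hz
          rcases List.mem_cons.mp hz with rfl | hz'
          · exact hp1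
          · exact hp1.trans ((List.pairwise_cons.mp hrest_pw).1 z hz')
        have hchain_transfer : ∀ l : List (Fin (n + 1)), (∀ z ∈ l, p < z) →
            l.IsChain (fun i j => v' i * v' j < 0) → l.IsChain (fun i j => v i * v j < 0) := by
          intro l
          induction l with
          | nil => intros; simp
          | cons x t iht =>
              intro hall hch
              rcases t with _ | ⟨y, t'⟩
              · simp
              · have hxy : v' x * v' y < 0 := (List.isChain_cons_cons.mp hch).1
                have hfx := hfactpos x (hall x (by simp))
                have hfy := hfactpos y (hall y (by simp))
                have : v x * v y < 0 := by
                  have heq : v' x * v' y = ((((x : ℕ) : ℝ) - θ) * (((y : ℕ) : ℝ) - θ)) * (v x * v y) := by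
                    simp only [hv', ha', hv]; ring
                  rw [heq] at hxy
                  exact x_neg_of (mul_pos hfx hfy) hxy
                exact List.isChain_cons_cons.mpr ⟨this,
                  iht (fun z hz => hall z (by simp [hz])) (List.isChain_cons_cons.mp hch).2⟩
        -- facts about e versus elements > p that are nonzero
        have h_e_lt : ∀ z : Fin (n + 1), p < z → v z ≠ 0 → 0 < v z * v μ → e < z := by
          intro z hpz hznz hzpos
          have hze : z ≠ e := by
            intro h; rw [h] at hzpos; nlinarith
          rcases lt_or_gt_of_ne hze with h | h
          · exact absurd (h_le_p z h hznz) (not_le.mpr hpz)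
          · exact h
        by_cases hc1 : i0 ≤ p
        · -- insert e after i0
          have hi0e : i0 < e := lt_of_le_of_lt hc1 hpe
          have h0pos : 0 < v i0 * v μ := h_pos_below i0 hi0e hvi0
          have hv0e : v i0 * v e < 0 := sign_opp h0pos he
          -- chain for v on rest, plus link from e into rest
          have hchrest : rest.IsChain (fun i j => v i * v j < 0) :=
            hchain_transfer rest hrest_gt hixch.tail
          have hrest_pos : ∀ z ∈ rest.head?.toList, 0 < v z * v μ ∧ e < z := by
            intro z hz
            rcases rest with _ | ⟨i1, rest'⟩
            · simp at hz
            · have hz1 : z = i1 := by simpa using hz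
              subst hz1
              have hch01 : v' i0 * v' z < 0 := (List.isChain_cons_cons.mp hixch).1
              have hf0 := hfactneg i0 hc1
              have hf1 := hfactpos z (hrest_gt z (by simp))
              have h01 : 0 < v i0 * v z := by
                have heq : v' i0 * v' z = ((((i0 : ℕ) : ℝ) - θ) * (((z : ℕ) : ℝ) - θ)) * (v i0 * v z) := by
                  simp only [hv', ha', hv]; ring
                rw [heq] at hch01
                exact x_pos_of (mul_neg_of_neg_of_pos hf0 hf1) hch01
              have hzpos : 0 < v z * v μ := sign_same (s := v i0)
                (by rw [mul_comm]; exact h01) (by rw [mul_comm]; exact h0pos)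
              exact ⟨hzpos, h_e_lt z (hrest_gt z (by simp)) (hrest_nz z (by simp)) hzpos⟩
          have hix2pw : (i0 :: e :: rest).Pairwise (· < ·) := by
            refine List.pairwise_cons.mpr ⟨?_, List.pairwise_cons.mpr ⟨?_, hrest_pw⟩⟩
            · intro z hz
              rcases List.mem_cons.mp hz with rfl | hz'
              · exact hi0e
              · exact hi0rest z hz'
            · intro z hz
              rcases rest with _ | ⟨i1, rest'⟩
              · simp at hz
              · have h1 := (hrest_pos i1 (by simp)).2
                rcases List.mem_cons.mp hz with rfl | hz'
                · exact h1
                · exact h1.trans ((List.pairwise_cons.mp hrest_pw).1 z hz')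
          have hix2nz : ∀ z ∈ (i0 :: e :: rest), v z ≠ 0 := by
            intro z hz
            rcases List.mem_cons.mp hz with rfl | hz'
            · exact hvi0
            rcases List.mem_cons.mp hz' with rfl | hz''
            · exact hve
            · exact hrest_nz z hz''
          have hix2ch : (i0 :: e :: rest).IsChain (fun i j => v i * v j < 0) := by
            refine List.isChain_cons_cons.mpr ⟨hv0e, ?_⟩
            rcases rest with _ | ⟨i1, rest'⟩
            · simp
            · refine List.isChain_cons_cons.mpr ⟨?_, hchrest⟩
              have := (hrest_pos i1 (by simp)).1
              exact mul_comm (v i1) (v e) ▸ sign_opp this he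
          have := ix_le v (i0 :: e :: rest) hix2pw hix2nz hix2ch
          simp only [List.length_cons] at this hixlen
          omega
        · push_neg at hc1
          have hall_gt : ∀ z ∈ (i0 :: rest), p < z := by
            intro z hz
            rcases List.mem_cons.mp hz with rfl | hz'
            · exact hc1
            · exact hrest_gt z hz'
          have hchain_v : (i0 :: rest).IsChain (fun i j => v i * v j < 0) :=
            hchain_transfer _ hall_gt hixch
          have hix_nz : ∀ z ∈ (i0 :: rest), v z ≠ 0 := by
            intro z hz
            rcases List.mem_cons.mp hz with rfl | hz'
            · exact hvi0
            · exact hrest_nz z hz'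
          by_cases hs0 : v i0 * v μ < 0
          · have hpi0 : v p * v i0 < 0 := sign_opp hvpμ hs0
            have hix2pw : (p :: i0 :: rest).Pairwise (· < ·) := by
              refine List.pairwise_cons.mpr ⟨?_, hixpw⟩
              intro z hz
              exact hall_gt z hz
            have := ix_le v (p :: i0 :: rest) hix2pw
              (by intro z hz
                  rcases List.mem_cons.mp hz with rfl | hz'
                  · exact hvp
                  · exact hix_nz z hz')
              (List.isChain_cons_cons.mpr ⟨hpi0, hchain_v⟩)
            simp only [List.length_cons] at this hixlen
            omega
          · have hs0' : 0 < v i0 * v μ := pos_of_ne (mul_ne_zero hvi0 hμ) hs0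
            have hei0 : e < i0 := h_e_lt i0 hc1 hvi0 hs0'
            have hpe0 : v p * v e < 0 := sign_opp hvpμ he
            have hei0' : v e * v i0 < 0 := mul_comm (v i0) (v e) ▸ sign_opp hs0' he
            have hix2pw : (p :: e :: i0 :: rest).Pairwise (· < ·) := by
              refine List.pairwise_cons.mpr ⟨?_, List.pairwise_cons.mpr ⟨?_, hixpw⟩⟩
              · intro z hz
                rcases List.mem_cons.mp hz with rfl | hz'
                · exact hpe
                rcases List.mem_cons.mp hz' with rfl | hz''
                · exact hc1
                · exact hrest_gt z hz''
              · intro z hz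
                rcases List.mem_cons.mp hz with rfl | hz'
                · exact hei0
                · exact hei0.trans (hi0rest z hz')
            have := ix_le v (p :: e :: i0 :: rest) hix2pw
              (by intro z hz
                  rcases List.mem_cons.mp hz with rfl | hz'
                  · exact hvp
                  rcases List.mem_cons.mp hz' with rfl | hz''
                  · exact hve
                  · exact hix_nz z hz'')
              (List.isChain_cons_cons.mpr ⟨hpe0, List.isChain_cons_cons.mpr ⟨hei0', hchain_v⟩⟩)
            simp only [List.length_cons] at this hixlen
            omega
      -- apply Rolle and the inductive hypothesis
      rcases roots with _ | ⟨r0, rs⟩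
      · simp
      obtain ⟨roots', hpw', hlen', hcond', _⟩ :=
        rolle_step a n θ (r0 :: rs) hpw hr (by simp)
      have : roots'.length ≤ V := by
        apply IH a' ?_ ⟨e, hv'e⟩ roots' hpw' ?_
        · exact hKey
        · intro r hrm
          exact hcond' r hrm
      simp only [List.length_cons] at hlen' ⊢
      omega

lemma strictSignChanges_of_all_zero {l : List ℝ} (h : ∀ x ∈ l, x = 0) :
    strictSignChanges l = 0 := by
  unfold strictSignChanges
  have : l.filter (fun x => decide (x ≠ 0)) = [] := by
    rw [List.filter_eq_nil_iff]
    intro a ha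
    simp [h a ha]
  rw [this]
  rfl

theorem polyVD (n : ℕ) (a : ℕ → ℝ) (M : ℕ) (u : Fin M → ℝ) (hu : StrictMono u)
    (h0 : ∀ j, 0 ≤ u j) :
    strictSignChanges (List.ofFn fun j => pEval a n (u j)) ≤
      strictSignChanges (List.ofFn fun i : Fin (n + 1) => a (i : ℕ)) := by
  set W := strictSignChanges (List.ofFn fun j => pEval a n (u j)) with hW
  rcases Nat.eq_zero_or_pos W with h | hWpos
  · omega
  have hvne : ∃ j, pEval a n (u j) ≠ 0 := by
    by_contra hcon
    push_neg at hcon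
    have : W = 0 := by
      rw [hW]
      apply strictSignChanges_of_all_zero
      intro y hy
      obtain ⟨j, rfl⟩ := List.mem_ofFn.mp hy
      exact hcon j
    omega
  obtain ⟨ix, hixpw, hixnz, hixch, hixlen⟩ := exists_ix _ hvne
  have hixne : ix ≠ [] := by
    intro h; rw [h] at hixlen; simp at hixlen
  set pts := ix.map u with hpts
  have hptspw : pts.Pairwise (· < ·) := List.pairwise_map.mpr (hixpw.imp (fun h => hu h))
  have hptsch : pts.IsChain (fun s t => pEval a n s * pEval a n t < 0) :=
    (List.isChain_map u).mpr hixch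
  have hptsne : pts ≠ [] := by
    intro h; exact hixne (List.map_eq_nil_iff.mp h)
  obtain ⟨roots, hrpw, hrlen, hrz, hrgt⟩ := roots_between' a n pts hptspw hptsch hptsne
  have hcoefne : ∃ i : Fin (n + 1), a (i : ℕ) ≠ 0 := by
    by_contra hcon
    push_neg at hcon
    obtain ⟨j, hj⟩ := hvne
    apply hj
    unfold pEval
    apply Finset.sum_eq_zero
    intro i hi
    rw [hcon ⟨i, Finset.mem_range.mp hi⟩]
    ring
  have hrpos : ∀ r ∈ roots, 0 < r ∧ pEval a n r = 0 := by
    intro r hrm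
    refine ⟨?_, hrz r hrm⟩
    rcases ix with _ | ⟨j0, ixt⟩
    · exact absurd rfl hixne
    · have := hrgt r hrm (u j0) (by simp [hpts])
      exact lt_of_le_of_lt (h0 j0) this
  have hlenW : roots.length = W := by
    have : pts.length = ix.length := List.length_map (as := ix) u
    omega
  have := descartes_lite n _ a le_rfl hcoefne roots hrpw hrpos
  omega

lemma sign_mul_pos_left (d x : ℝ) (hd : 0 < d) : SignType.sign (d * x) = SignType.sign x := by
  rw [sign_mul, sign_pos hd, one_mul]

lemma sign_div_pos (N D : ℝ) (hD : 0 < D) : SignType.sign (N / D) = SignType.sign N := by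
  rw [div_eq_inv_mul, sign_mul_pos_left _ _ (inv_pos.mpr hD)]

lemma sign_add_of_abs_lt {x y : ℝ} (h : |y| < |x|) : SignType.sign (x + y) = SignType.sign x := by
  rcases lt_trichotomy x 0 with hx | hx | hx
  · have h1 : x + y < 0 := by
      rw [abs_of_neg hx] at h
      rcases abs_lt.mp h with ⟨h2, h3⟩
      linarith
    rw [sign_neg h1, sign_neg hx]
  · subst hx; simp at h; linarith [abs_nonneg y]
  · have h1 : 0 < x + y := by
      rw [abs_of_pos hx] at h
      rcases abs_lt.mp h with ⟨h2, h3⟩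
      linarith
    rw [sign_pos h1, sign_pos hx]

lemma pEval_large (n : ℕ) (a : ℕ → ℝ) (hn : a n ≠ 0) (U : ℝ) (hU1 : 1 ≤ U)
    (hU2 : ∑ i ∈ Finset.range n, |a i| < |a n| * U) :
    SignType.sign (pEval a n U) = SignType.sign (a n) := by
  have hUpos : (0 : ℝ) < U := lt_of_lt_of_le one_pos hU1
  rcases Nat.eq_zero_or_pos n with rfl | hnpos
  · unfold pEval; simp
  obtain ⟨m, rfl⟩ := Nat.exists_eq_add_of_lt hnpos
  rw [zero_add] at *
  have hsplit : pEval a (m + 1) U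
      = a (m + 1) * U ^ (m + 1) + ∑ i ∈ Finset.range (m + 1), a i * U ^ i := by
    unfold pEval
    rw [Finset.sum_range_succ]; ring
  have habs : |∑ i ∈ Finset.range (m + 1), a i * U ^ i| < |a (m + 1) * U ^ (m + 1)| := by
    have h1 : |∑ i ∈ Finset.range (m + 1), a i * U ^ i|
        ≤ ∑ i ∈ Finset.range (m + 1), |a i| * U ^ m := by
      refine (Finset.abs_sum_le_sum_abs _ _).trans (Finset.sum_le_sum ?_)
      intro i hi
      rw [abs_mul, abs_pow, abs_of_pos hUpos]
      have : U ^ i ≤ U ^ m := pow_le_pow_right₀ hU1 (by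
        have := Finset.mem_range.mp hi; omega)
      exact mul_le_mul_of_nonneg_left this (abs_nonneg _)
    have h2 : ∑ i ∈ Finset.range (m + 1), |a i| * U ^ m
        = (∑ i ∈ Finset.range (m + 1), |a i|) * U ^ m := by
      rw [Finset.sum_mul]
    have h3 : (∑ i ∈ Finset.range (m + 1), |a i|) * U ^ m
        < (|a (m + 1)| * U) * U ^ m :=
      mul_lt_mul_of_pos_right hU2 (pow_pos hUpos m)
    have h4 : |a (m + 1) * U ^ (m + 1)| = (|a (m + 1)| * U) * U ^ m := by
      rw [abs_mul, abs_pow, abs_of_pos hUpos, pow_succ]; ring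
    rw [h4]; linarith
  rw [hsplit, sign_add_of_abs_lt habs, mul_comm, sign_mul_pos_left _ _ (pow_pos hUpos _)]

lemma strictSignChanges_append_zero (l : List ℝ) (z : ℝ) (hz : z = 0) :
    strictSignChanges (l ++ [z]) = strictSignChanges l := by
  unfold strictSignChanges
  rw [List.filter_append]
  simp [hz]

lemma dq_eq (x y c : ℝ) : dq x y c = c * (Real.sin y * Real.cos x) - Real.sin x * Real.cos y := by
  unfold dq; rw [Real.sin_sub, Real.sin_add]; ring

lemma dq_formula (k : ℤ) : ∃ Λ : ℝ → ℝ, (∀ y : ℝ, 0 < y → 0 < Λ y) ∧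
    (∀ y x, dq ((k : ℝ) * Real.pi / 2) x y = Λ y * Real.sin (x - (k : ℝ) * Real.pi / 2)) ∧
    (∀ y x, dq x (((k : ℝ) + 1) * Real.pi / 2) y = Λ y * Real.cos (x - (k : ℝ) * Real.pi / 2)) := by
  set A := (k : ℝ) * Real.pi / 2 with hA
  have hb : ((k : ℝ) + 1) * Real.pi / 2 = A + Real.pi / 2 := by rw [hA]; ring
  rcases Int.even_or_odd k with ⟨l, hl⟩ | ⟨l, hl⟩
  · have hsA : Real.sin A = 0 := by
      have h1 : A = (l : ℝ) * Real.pi := by rw [hA, hl]; push_cast; ring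
      rw [h1]; exact Real.sin_int_mul_pi l
    refine ⟨fun y => y, fun y hy => hy, ?_, ?_⟩
    · intro y x
      rw [dq_eq, Real.sin_sub, hsA]; ring
    · intro y x
      rw [hb, dq_eq, Real.sin_add_pi_div_two, Real.cos_add_pi_div_two, Real.cos_sub, hsA]; ring
  · have hcA : Real.cos A = 0 := by
      have h1 : A = (l : ℝ) * Real.pi + Real.pi / 2 := by rw [hA, hl]; push_cast; ring
      rw [h1, Real.cos_add_pi_div_two, Real.sin_int_mul_pi, neg_zero]
    refine ⟨fun _ => 1, fun y hy => one_pos, ?_, ?_⟩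
    · intro y x; rw [dq_eq, Real.sin_sub, hcA]; ring
    · intro y x; rw [hb, dq_eq, Real.sin_add_pi_div_two, Real.cos_add_pi_div_two, Real.cos_sub, hcA]; ring

lemma qInt_pos {q : ℝ} (hq : 0 < q) {k : ℕ} (hk : 0 < k) : 0 < qInt q k := by
  unfold qInt
  apply Finset.sum_pos (fun i _ => pow_pos hq i)
  exact Finset.nonempty_range_iff.mpr hk.ne'

lemma qFact_pos {q : ℝ} (hq : 0 < q) : ∀ k, 0 < qFact q k
  | 0 => one_pos
  | k + 1 => mul_pos (qInt_pos hq k.succ_pos) (qFact_pos hq k)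

lemma qBinom_pos {q : ℝ} (hq : 0 < q) (n j : ℕ) : 0 < qBinom q n j :=
  div_pos (qFact_pos hq n) (mul_pos (qFact_pos hq j) (qFact_pos hq (n - j)))

lemma qBern_formula (q : ℝ) (hq : 0 < q) (k : ℤ) (n j : ℕ) (hj : j ≤ n) :
    ∃ C : ℝ, 0 < C ∧ ∀ x, qBern q ((k : ℝ) * Real.pi / 2) (((k : ℝ) + 1) * Real.pi / 2) n j x
      = C * Real.sin (x - (k : ℝ) * Real.pi / 2) ^ j
          * Real.cos (x - (k : ℝ) * Real.pi / 2) ^ (n - j) := by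
  obtain ⟨Λ, hΛpos, hd1, hd2⟩ := dq_formula k
  set A := (k : ℝ) * Real.pi / 2 with hA
  set Bb := ((k : ℝ) + 1) * Real.pi / 2 with hB
  have hΛq : ∀ i : ℕ, 0 < Λ (q ^ i) := fun i => hΛpos _ (pow_pos hq i)
  have hden : ∀ i : ℕ, dq A Bb (q ^ i) = Λ (q ^ i) := by
    intro i
    rw [hd1 (q ^ i) Bb]
    have h1 : Bb - A = Real.pi / 2 := by rw [hA, hB]; ring
    rw [h1, Real.sin_pi_div_two, mul_one]
  refine ⟨qBinom q n j * ((∏ i ∈ Finset.range j, Λ (q ^ i)) * ∏ i ∈ Finset.range (n - j), Λ (q ^ i))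
      / ∏ i ∈ Finset.range n, Λ (q ^ i), ?_, ?_⟩
  · apply div_pos
    · exact mul_pos (qBinom_pos hq n j)
        (mul_pos (Finset.prod_pos fun i _ => hΛq i) (Finset.prod_pos fun i _ => hΛq i))
    · exact Finset.prod_pos fun i _ => hΛq i
  · intro x
    unfold qBern
    have h1 : (∏ i ∈ Finset.range j, dq A x (q ^ i))
        = (∏ i ∈ Finset.range j, Λ (q ^ i)) * Real.sin (x - A) ^ j := by
      rw [Finset.prod_congr rfl (fun i _ => hd1 (q ^ i) x), Finset.prod_mul_distrib,
        Finset.prod_const, Finset.card_range]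
    have h2 : (∏ i ∈ Finset.range (n - j), dq x Bb (q ^ i))
        = (∏ i ∈ Finset.range (n - j), Λ (q ^ i)) * Real.cos (x - A) ^ (n - j) := by
      rw [Finset.prod_congr rfl (fun i _ => hd2 (q ^ i) x), Finset.prod_mul_distrib,
        Finset.prod_const, Finset.card_range]
    have h3 : (∏ i ∈ Finset.range n, dq A Bb (q ^ i)) = ∏ i ∈ Finset.range n, Λ (q ^ i) :=
      Finset.prod_congr rfl (fun i _ => hden i)
    rw [h1, h2, h3]
    ring

/-- Variation diminishing property for rational quantum trigonometric Bézier curves with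
scalar control points. -/
theorem rational_bezier_variation_diminishing (n : ℕ) (q : ℝ) (hq : 0 < q) (k : ℤ)
    (w : Fin (n + 1) → ℝ) (hw : ∀ i, 0 < w i) (bp : Fin (n + 1) → ℝ)
    (m : ℕ) (x : Fin (m + 1) → ℝ) (hx : StrictMono x)
    (hxI : ∀ j, x j ∈ Set.Icc ((k : ℝ) * Real.pi / 2) (((k : ℝ) + 1) * Real.pi / 2)) :
    strictSignChanges (List.ofFn fun j : Fin (m + 1) =>
        ∑ i : Fin (n + 1),
          bp i *
            rqBern q ((k : ℝ) * Real.pi / 2) (((k : ℝ) + 1) * Real.pi / 2) n w i (x j)) ≤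
      strictSignChanges (List.ofFn bp) := by
  classical
  have hπ := Real.pi_pos
  set A : ℝ := (k : ℝ) * Real.pi / 2 with hAdef
  set Bb : ℝ := ((k : ℝ) + 1) * Real.pi / 2 with hBdef
  have hBA : Bb = A + Real.pi / 2 := by rw [hAdef, hBdef]; ring
  have ht0 : ∀ j, 0 ≤ x j - A := fun j => by linarith [(hxI j).1]
  have htle : ∀ j, x j - A ≤ Real.pi / 2 := fun j => by
    have := (hxI j).2; rw [hBA] at this; linarith
  have hs0 : ∀ j, 0 ≤ Real.sin (x j - A) := fun j =>
    Real.sin_nonneg_of_nonneg_of_le_pi (ht0 j) ((htle j).trans (by linarith))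
  have hc0 : ∀ j, 0 ≤ Real.cos (x j - A) := fun j =>
    Real.cos_nonneg_of_mem_Icc ⟨by linarith [ht0 j], htle j⟩
  have hcpos : ∀ j, x j - A < Real.pi / 2 → 0 < Real.cos (x j - A) := fun j hj =>
    Real.cos_pos_of_mem_Ioo ⟨by linarith [ht0 j], hj⟩
  -- basis representation
  have hCex : ∀ i : Fin (n + 1), ∃ C : ℝ, 0 < C ∧ ∀ y, qBern q A Bb n (i : ℕ) y
      = C * Real.sin (y - A) ^ (i : ℕ) * Real.cos (y - A) ^ (n - (i : ℕ)) := fun i =>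
    qBern_formula q hq k n (i : ℕ) i.is_le
  choose C hCpos hCeq using hCex
  -- denominator positivity
  have hDpos : ∀ j, 0 < ∑ i : Fin (n + 1), w i * qBern q A Bb n (i : ℕ) (x j) := by
    intro j
    apply Finset.sum_pos'
    · intro i _
      rw [hCeq i (x j)]
      exact mul_nonneg (hw i).le (mul_nonneg (mul_nonneg (hCpos i).le
        (pow_nonneg (hs0 j) _)) (pow_nonneg (hc0 j) _))
    · by_cases hcj : x j - A < Real.pi / 2
      · refine ⟨0, Finset.mem_univ _, ?_⟩
        rw [hCeq 0 (x j)]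
        have h0 : ((0 : Fin (n + 1)) : ℕ) = 0 := rfl
        rw [h0, pow_zero, Nat.sub_zero]
        exact mul_pos (hw 0) (mul_pos (mul_pos (hCpos 0) one_pos) (pow_pos (hcpos j hcj) n))
      · have htj : x j - A = Real.pi / 2 := le_antisymm (htle j) (not_lt.mp hcj)
        refine ⟨Fin.last n, Finset.mem_univ _, ?_⟩
        rw [hCeq (Fin.last n) (x j)]
        have h0 : ((Fin.last n : Fin (n + 1)) : ℕ) = n := rfl
        rw [h0, Nat.sub_self, pow_zero, htj, Real.sin_pi_div_two, one_pow]
        exact mul_pos (hw _) (mul_pos (mul_pos (hCpos _) one_pos) one_pos)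
  -- the numerator coefficients
  set Ai : Fin (n + 1) → ℝ := fun i => bp i * (w i * C i) with hAidef
  set ahat : ℕ → ℝ := fun i => if h : i < n + 1 then Ai ⟨i, h⟩ else 0 with hahatdef
  have hahat_eq : ∀ i : Fin (n + 1), ahat (i : ℕ) = Ai i := by
    intro i
    rw [hahatdef]
    simp only [i.isLt, dif_pos, Fin.eta]
  -- the curve values
  set V : Fin (m + 1) → ℝ := fun j =>
    ∑ i : Fin (n + 1), bp i * rqBern q A Bb n w i (x j) with hVdef
  have hVeq : ∀ j, V j =
      (∑ i : Fin (n + 1), Ai i * (Real.sin (x j - A) ^ (i : ℕ) * Real.cos (x j - A) ^ (n - (i : ℕ))))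
        / ∑ i : Fin (n + 1), w i * qBern q A Bb n (i : ℕ) (x j) := by
    intro j
    rw [hVdef]
    rw [Finset.sum_div]
    apply Finset.sum_congr rfl
    intro i _
    unfold rqBern
    rw [hCeq i (x j), hAidef]
    ring
  have hsignV : ∀ j, x j - A < Real.pi / 2 →
      SignType.sign (V j) = SignType.sign (pEval ahat n (Real.tan (x j - A))) := by
    intro j hj
    have hcj := hcpos j hj
    rw [hVeq j, sign_div_pos _ _ (hDpos j)]
    have hnum : (∑ i : Fin (n + 1),
        Ai i * (Real.sin (x j - A) ^ (i : ℕ) * Real.cos (x j - A) ^ (n - (i : ℕ))))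
        = Real.cos (x j - A) ^ n * pEval ahat n (Real.tan (x j - A)) := by
      unfold pEval
      rw [← Fin.sum_univ_eq_sum_range (fun i => ahat i * Real.tan (x j - A) ^ i) (n + 1),
        Finset.mul_sum]
      apply Finset.sum_congr rfl
      intro i _
      rw [hahat_eq i, Real.tan_eq_sin_div_cos, div_pow]
      have hcn : Real.cos (x j - A) ^ n
          = Real.cos (x j - A) ^ (i : ℕ) * Real.cos (x j - A) ^ (n - (i : ℕ)) := by
        rw [← pow_add, Nat.add_sub_cancel' i.is_le]
      rw [hcn]
      field_simp
    rw [hnum, sign_mul_pos_left _ _ (pow_pos hcj n)]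
  have hsign_bp : ∀ i : Fin (n + 1), SignType.sign (Ai i) = SignType.sign (bp i) := by
    intro i
    have h1 : Ai i = (w i * C i) * bp i := by rw [hAidef]; ring
    rw [h1, sign_mul_pos_left _ _ (mul_pos (hw i) (hCpos i))]
  have hcoeff_list : strictSignChanges (List.ofFn fun i : Fin (n + 1) => ahat (i : ℕ))
      = strictSignChanges (List.ofFn bp) := by
    apply strictSignChanges_congr
    rw [List.map_ofFn, List.map_ofFn]
    congr 1
    funext i
    simp only [Function.comp_apply]
    rw [hahat_eq i, hsign_bp i]
  have htmono : ∀ j j' : Fin (m + 1), j < j' → x j - A < x j' - A := by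
    intro j j' h
    have := hx h
    linarith
  by_cases hlastlt : x (Fin.last m) - A < Real.pi / 2
  · -- all points interior
    have hall : ∀ j, x j - A < Real.pi / 2 := by
      intro j
      rcases eq_or_lt_of_le (Fin.le_last j) with h | h
      · rw [h]; exact hlastlt
      · exact (htmono j (Fin.last m) h).trans hlastlt
    set u : Fin (m + 1) → ℝ := fun j => Real.tan (x j - A) with hu
    have humono : StrictMono u := by
      intro j j' hjj'
      exact Real.strictMonoOn_tan
        ⟨by linarith [ht0 j], hall j⟩ ⟨by linarith [ht0 j'], hall j'⟩ (htmono j j' hjj')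
    have hun : ∀ j, 0 ≤ u j := by
      intro j
      show 0 ≤ Real.tan (x j - A)
      rw [Real.tan_eq_sin_div_cos]
      exact div_nonneg (hs0 j) (hc0 j)
    have hcong : strictSignChanges (List.ofFn V)
        = strictSignChanges (List.ofFn fun j => pEval ahat n (u j)) := by
      apply strictSignChanges_congr
      rw [List.map_ofFn, List.map_ofFn]
      congr 1
      funext j
      simp only [Function.comp_apply]
      exact hsignV j (hall j)
    rw [← hcoeff_list]
    rw [hcong]
    exact polyVD n ahat (m + 1) u humono hun
  · -- last point is the right endpoint
    have hlast_eq : x (Fin.last m) - A = Real.pi / 2 := le_antisymm (htle _) (not_lt.mp hlastlt)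
    have hinterior : ∀ j : Fin (m + 1), j ≠ Fin.last m → x j - A < Real.pi / 2 := by
      intro j hj
      have hlt : j < Fin.last m := lt_of_le_of_ne (Fin.le_last j) hj
      rw [← hlast_eq]
      exact htmono j (Fin.last m) hlt
    have hNumLast : (∑ i : Fin (n + 1),
        Ai i * (Real.sin (x (Fin.last m) - A) ^ (i : ℕ)
          * Real.cos (x (Fin.last m) - A) ^ (n - (i : ℕ))))
        = Ai (Fin.last n) := by
      rw [Finset.sum_eq_single (Fin.last n)]
      · have h0 : ((Fin.last n : Fin (n + 1)) : ℕ) = n := rfl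
        rw [h0, Nat.sub_self, pow_zero, hlast_eq, Real.sin_pi_div_two, one_pow, mul_one, mul_one]
      · intro i _ hne
        have hlt : (i : ℕ) < n := by
          rcases lt_or_eq_of_le (Nat.lt_succ_iff.mp i.isLt) with h | h
          · exact h
          · exact absurd (Fin.ext (h.trans rfl) : i = Fin.last n) hne
        rw [hlast_eq, Real.cos_pi_div_two, zero_pow (by omega : n - (i : ℕ) ≠ 0)]
        ring
      · intro h; exact absurd (Finset.mem_univ _) h
    have hsignVlast : SignType.sign (V (Fin.last m)) = SignType.sign (Ai (Fin.last n)) := by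
      rw [hVeq _, sign_div_pos _ _ (hDpos _), hNumLast]
    by_cases hbpn : bp (Fin.last n) = 0
    · -- last value is zero; drop it
      have hAin : Ai (Fin.last n) = 0 := by rw [hAidef]; simp [hbpn]
      have hVl0 : V (Fin.last m) = 0 := by
        rw [hVeq _, hNumLast, hAin, zero_div]
      have hdecomp : List.ofFn V
          = (List.ofFn fun j : Fin m => V j.castSucc) ++ [V (Fin.last m)] := by
        rw [List.ofFn_succ' V]
        simp [List.concat_eq_append]
      set u : Fin m → ℝ := fun j => Real.tan (x j.castSucc - A) with hu
      have humono : StrictMono u := by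
        intro j j' hjj'
        have h1 := hinterior j.castSucc (Fin.ne_last_of_lt (Fin.castSucc_lt_last j))
        have h2 := hinterior j'.castSucc (Fin.ne_last_of_lt (Fin.castSucc_lt_last j'))
        exact Real.strictMonoOn_tan
          ⟨by linarith [ht0 j.castSucc], h1⟩ ⟨by linarith [ht0 j'.castSucc], h2⟩
          (htmono _ _ (by exact_mod_cast hjj'))
      have hun : ∀ j, 0 ≤ u j := by
        intro j
        show 0 ≤ Real.tan (x j.castSucc - A)
        rw [Real.tan_eq_sin_div_cos]
        exact div_nonneg (hs0 _) (hc0 _)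
      have hcong : strictSignChanges (List.ofFn fun j : Fin m => V j.castSucc)
          = strictSignChanges (List.ofFn fun j => pEval ahat n (u j)) := by
        apply strictSignChanges_congr
        rw [List.map_ofFn, List.map_ofFn]
        congr 1
        funext j
        simp only [Function.comp_apply]
        exact hsignV j.castSucc (hinterior _ (Fin.ne_last_of_lt (Fin.castSucc_lt_last j)))
      rw [hdecomp, strictSignChanges_append_zero _ _ hVl0, hcong, ← hcoeff_list]
      exact polyVD n ahat m u humono hun
    · -- last control coefficient nonzero : compare with a large sample point
      have hahat_n : ahat n = Ai (Fin.last n) := hahat_eq (Fin.last n)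
      have hAn : ahat n ≠ 0 := by
        rw [hahat_n, hAidef]
        exact mul_ne_zero hbpn (mul_pos (hw _) (hCpos _)).ne'
      set Sabs := ∑ i ∈ Finset.range (n + 1), |ahat i| with hSabs
      have hSabs0 : 0 ≤ Sabs := Finset.sum_nonneg fun i _ => abs_nonneg _
      have habsn : 0 < |ahat n| := abs_pos.mpr hAn
      set T := Finset.univ.sup' ⟨Fin.last m, Finset.mem_univ _⟩
        (fun j : Fin (m + 1) => Real.tan (x j - A)) with hT
      set U := max (1 + Sabs / |ahat n|) (T + 1) with hU
      have hU1 : (1 : ℝ) ≤ U :=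
        le_trans (by linarith [div_nonneg hSabs0 (abs_nonneg (ahat n))]) (le_max_left _ _)
      have hU2 : ∑ i ∈ Finset.range n, |ahat i| < |ahat n| * U := by
        have h1 : |ahat n| * (1 + Sabs / |ahat n|) = |ahat n| + Sabs := by
          field_simp
        have h2 : ∑ i ∈ Finset.range n, |ahat i| ≤ Sabs := by
          rw [hSabs]
          exact Finset.sum_le_sum_of_subset_of_nonneg
            (Finset.range_subset_range.mpr (Nat.le_succ n)) (fun i _ _ => abs_nonneg _)
        have h3 : |ahat n| * (1 + Sabs / |ahat n|) ≤ |ahat n| * U :=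
          mul_le_mul_of_nonneg_left (le_max_left _ _) (abs_nonneg _)
        linarith
      have hUgt : ∀ j, Real.tan (x j - A) < U := by
        intro j
        have h1 : Real.tan (x j - A) ≤ T :=
          Finset.le_sup' (fun j : Fin (m + 1) => Real.tan (x j - A)) (Finset.mem_univ j)
        have h2 : T + 1 ≤ U := le_max_right _ _
        linarith
      set u : Fin (m + 1) → ℝ := fun j =>
        if j = Fin.last m then U else Real.tan (x j - A) with hu
      have humono : StrictMono u := by
        intro j j' hjj'
        have hjne : j ≠ Fin.last m := Fin.ne_last_of_lt hjj'
        by_cases hj' : j' = Fin.last m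
        · simp only [hu, if_neg hjne, if_pos hj']
          exact hUgt j
        · simp only [hu, if_neg hjne, if_neg hj']
          exact Real.strictMonoOn_tan
            ⟨by linarith [ht0 j], hinterior j hjne⟩
            ⟨by linarith [ht0 j'], hinterior j' hj'⟩ (htmono j j' hjj')
      have hun : ∀ j, 0 ≤ u j := by
        intro j
        by_cases hj : j = Fin.last m
        · simp only [hu, if_pos hj]; linarith
        · simp only [hu, if_neg hj]
          rw [Real.tan_eq_sin_div_cos]
          exact div_nonneg (hs0 _) (hc0 _)
      have hcong : strictSignChanges (List.ofFn V)
          = strictSignChanges (List.ofFn fun j => pEval ahat n (u j)) := by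
        apply strictSignChanges_congr
        rw [List.map_ofFn, List.map_ofFn]
        congr 1
        funext j
        simp only [Function.comp_apply]
        by_cases hj : j = Fin.last m
        · subst hj
          simp only [hu, if_pos rfl]
          rw [hsignVlast, ← hahat_n, pEval_large n ahat hAn U hU1 hU2]
        · simp only [hu, if_neg hj]
          exact hsignV j (hinterior j hj)
      rw [hcong, ← hcoeff_list]
      exact polyVD n ahat (m + 1) u humono hun
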